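/- (Restricted large sieve moment) There is an absolute constant C > 0 such that the following holds. Let Q ≥ 1 be a real number, let β_1, …, β_R be real numbers that are 1/Q-separated modulo 1 (i.e. ‖β_i − β_j‖ ≥ 1/Q for all i ≠ j), and let c_1, …, c_R be reals with c_i ≥ 1 for all i; set J := ∑_{i=1}^R c_i. Then ∑_{n ∈ ℤ, |n| ≤ Q} | ∑_{i=1}^R c_i^{1/2} e(n β_i) |^{20/9} ≤ C J^{11/9} Q. -/

import Mathlib

open Finset

/-- `ee t = e(t) := exp(2πit)`. -/
noncomputable def ee (t : ℝ) : ℂ := Complex.exp (2 * Real.pi * Complex.I * t)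

/-- `distToInt t = ‖t‖`, the distance from the real `t` to the nearest integer. -/
noncomputable def distToInt (t : ℝ) : ℝ := |t - round t|

/-!
As `c_i ≥ 1`, the sum `S(n) = ∑ a_i e(n β_i)` with `a_i = c_i^{1/2}` is bounded by `J`, so
`|S(n)|^{20/9} ≤ J^{2/9} |S(n)|²` and it suffices to prove the large sieve bound
`∑_{|n| ≤ Q} |S(n)|² ≤ 10 Q J`. Averaging `|S(m - m')|²` over `0 ≤ m, m' ≤ 2N` (with `N = ⌊Q⌋`)
dominates `(N + 1) ∑_{|n| ≤ N} |S(n)|²` and turns it into the quadratic form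
`∑_{i,j} a_i ā_j |∑_m e(m (β_i - β_j))|²`. Its kernel is `(2N + 1)²` on the diagonal and at most
`1 / (4 ‖β_i - β_j‖²)` off it, and by separation at most two `j` have
`‖β_i - β_j‖ ∈ [k/Q, (k+1)/Q)`, so that `∑_{j ≠ i} ‖β_i - β_j‖⁻² ≤ 4 Q²`. Schur's test then
bounds the form by `10 Q² ∑ |a_i|²`.
-/

open ComplexConjugate

lemma ee_add (s t : ℝ) : ee (s + t) = ee s * ee t := by
  rw [ee, ee, ee, ← Complex.exp_add]; push_cast; ring_nf

lemma ee_zero : ee 0 = 1 := by simp [ee]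

lemma ee_intCast (n : ℤ) : ee n = 1 := by
  rw [ee, ← Complex.exp_int_mul_two_pi_mul_I n]; push_cast; ring_nf

lemma ee_add_intCast (t : ℝ) (n : ℤ) : ee (t + n) = ee t := by
  rw [ee_add, ee_intCast, mul_one]

lemma ee_neg (t : ℝ) : ee (-t) = conj (ee t) := by
  rw [ee, ee, ← Complex.exp_conj]; simp [map_ofNat]

lemma norm_ee (t : ℝ) : ‖ee t‖ = 1 := by
  rw [ee, show (2 * Real.pi * Complex.I * t : ℂ) = (2 * Real.pi * t : ℝ) * Complex.I by
    push_cast; ring]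
  exact Complex.norm_exp_ofReal_mul_I _

lemma ee_natCast_mul (m : ℕ) (t : ℝ) : ee (m * t) = ee t ^ m := by
  rw [ee, ee, ← Complex.exp_nat_mul]; push_cast; ring_nf

lemma four_mul_distToInt_le_norm_ee_sub_one (t : ℝ) : 4 * distToInt t ≤ ‖ee t - 1‖ := by
  set r := t - round t
  have hee : ee t = Complex.exp (Complex.I * (2 * Real.pi * r : ℝ)) := by
    rw [show t = r + round t by ring, ee_add_intCast, ee]; push_cast; ring_nf
  have hπr : |Real.pi * r| ≤ Real.pi / 2 := by
    rw [abs_mul, abs_of_pos Real.pi_pos]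
    nlinarith [abs_sub_round t, Real.pi_pos]
  calc 4 * distToInt t = 2 * (2 / Real.pi * |Real.pi * r|) := by
        rw [distToInt, abs_mul, abs_of_pos Real.pi_pos]; field_simp; ring
    _ ≤ 2 * |Real.sin (Real.pi * r)| := by gcongr; exact Real.mul_abs_le_abs_sin hπr
    _ = ‖ee t - 1‖ := by
        rw [hee, Complex.norm_exp_I_mul_ofReal_sub_one, Real.norm_eq_abs, abs_mul, abs_two]
        ring_nf

lemma norm_sum_range_ee_le (M : ℕ) {t : ℝ} (ht : 0 < distToInt t) :
    ‖∑ m ∈ range M, ee (m * t)‖ ≤ 1 / (2 * distToInt t) := by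
  have hlow := four_mul_distToInt_le_norm_ee_sub_one t
  have hne : ee t - 1 ≠ 0 := norm_pos_iff.mp (by linarith)
  simp_rw [ee_natCast_mul]
  rw [geom_sum_eq (sub_ne_zero.mp hne), norm_div, div_le_div_iff₀ (by linarith) (by positivity)]
  have hnum : ‖ee t ^ M - 1‖ ≤ 2 := by
    grw [norm_sub_le, norm_pow, norm_ee, one_pow, norm_one]; norm_num
  nlinarith [norm_nonneg (ee t ^ M - 1)]

lemma Finset.sum_comp_le_sum_of_injOn {ι κ M : Type*} [AddCommMonoid M] [PartialOrder M]
    [IsOrderedAddMonoid M] {s : Finset ι} {t : Finset κ} {g : ι → κ} (f : κ → M)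
    (hg : Set.MapsTo g s t) (hinj : Set.InjOn g s) (hf : ∀ y ∈ t, 0 ≤ f y) :
    ∑ x ∈ s, f (g x) ≤ ∑ y ∈ t, f y := by
  classical
  rw [← sum_image hinj]
  exact sum_le_sum_of_subset_of_nonneg (image_subset_iff.2 hg) fun y hy _ ↦ hf y hy

lemma sum_one_div_sq_le_of_separated_of_pos {ι : Type*} (s : Finset ι) (x : ι → ℝ) {δ : ℝ}
    (hδ : 0 < δ) (hx : ∀ i ∈ s, δ ≤ x i)
    (hsep : ∀ i ∈ s, ∀ j ∈ s, i ≠ j → δ ≤ |x i - x j|) :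
    ∑ i ∈ s, 1 / x i ^ 2 ≤ 2 / δ ^ 2 := by
  set k : ι → ℕ := fun i ↦ ⌊x i / δ⌋₊
  have hk_pos : ∀ i ∈ s, 0 < k i := fun i hi ↦
    Nat.floor_pos.2 ((one_le_div hδ).2 (hx i hi))
  have hx0 : ∀ i ∈ s, 0 ≤ x i / δ := fun i hi ↦ div_nonneg (hδ.le.trans (hx i hi)) hδ.le
  have hk_le : ∀ i ∈ s, 1 / x i ^ 2 ≤ 1 / (k i * δ) ^ 2 := by
    intro i hi
    have hkx : k i * δ ≤ x i := (le_div_iff₀ hδ).1 (Nat.floor_le (hx0 i hi))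
    have hk0 : (0 : ℝ) < k i := by exact_mod_cast hk_pos i hi
    exact one_div_le_one_div_of_le (by positivity) (pow_le_pow_left₀ (by positivity) hkx 2)
  have hinj : Set.InjOn k s := by
    intro i hi j hj hij
    by_contra hne
    have hfl : ⌊x i / δ⌋ = ⌊x j / δ⌋ := by
      rw [← Int.natCast_floor_eq_floor (hx0 i hi), ← Int.natCast_floor_eq_floor (hx0 j hj)]
      exact congrArg _ hij
    have := Int.abs_sub_lt_one_of_floor_eq_floor hfl
    rw [← sub_div, abs_div, abs_of_pos hδ, div_lt_one hδ] at this
    exact (hsep i hi j hj hne).not_gt this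
  have hmaps : Set.MapsTo k s (Ioo 0 (s.sup k + 1)) := fun i hi ↦
    mem_Ioo.2 ⟨hk_pos i hi, Nat.lt_succ_of_le (le_sup hi)⟩
  calc ∑ i ∈ s, 1 / x i ^ 2 ≤ ∑ i ∈ s, 1 / (k i * δ) ^ 2 := sum_le_sum hk_le
    _ ≤ ∑ n ∈ Ioo 0 (s.sup k + 1), 1 / (n * δ) ^ 2 :=
        sum_comp_le_sum_of_injOn (fun n : ℕ ↦ 1 / (n * δ) ^ 2) hmaps hinj
          fun _ _ ↦ by positivity
    _ = (∑ n ∈ Ioo 0 (s.sup k + 1), ((n : ℝ) ^ 2)⁻¹) / δ ^ 2 := by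
        rw [sum_div]; exact sum_congr rfl fun n _ ↦ by ring
    _ ≤ (2 / (0 + 1)) / δ ^ 2 := by gcongr; exact_mod_cast sum_Ioo_inv_sq_le (α := ℝ) 0 _
    _ = 2 / δ ^ 2 := by ring

lemma sum_one_div_sq_le_of_separated {ι : Type*} (s : Finset ι) (x : ι → ℝ) {δ : ℝ}
    (hδ : 0 < δ) (hx : ∀ i ∈ s, δ ≤ |x i|)
    (hsep : ∀ i ∈ s, ∀ j ∈ s, i ≠ j → δ ≤ |x i - x j|) :
    ∑ i ∈ s, 1 / x i ^ 2 ≤ 4 / δ ^ 2 := by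
  rw [← sum_filter_add_sum_filter_not s (fun i ↦ 0 ≤ x i)]
  have hpos := sum_one_div_sq_le_of_separated_of_pos (s.filter (0 ≤ x ·)) x hδ
    (fun i hi ↦ by
      obtain ⟨hi, hxi⟩ := mem_filter.1 hi
      simpa [abs_of_nonneg hxi] using hx i hi)
    fun i hi j hj ↦ hsep i (mem_filter.1 hi).1 j (mem_filter.1 hj).1
  have hneg := sum_one_div_sq_le_of_separated_of_pos (s.filter (¬0 ≤ x ·)) (-x) hδ
    (fun i hi ↦ by
      obtain ⟨hi, hxi⟩ := mem_filter.1 hi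
      simpa [abs_of_neg (not_le.1 hxi)] using hx i hi)
    fun i hi j hj hij ↦ by
      rw [Pi.neg_apply, Pi.neg_apply, neg_sub_neg, abs_sub_comm]
      exact hsep i (mem_filter.1 hi).1 j (mem_filter.1 hj).1 hij
  simp only [Pi.neg_apply, neg_sq] at hneg
  calc _ ≤ 2 / δ ^ 2 + 2 / δ ^ 2 := add_le_add hpos hneg
    _ = 4 / δ ^ 2 := by ring

/-- Each `n` with `|n| ≤ N` is a difference `m - m'` with `0 ≤ m, m' ≤ 2N` in at least `N + 1`
ways. -/
lemma add_one_mul_sum_Icc_le_sum_range_sum_range (N : ℕ) (f : ℤ → ℝ) (hf : ∀ n, 0 ≤ f n) :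
    (N + 1) * ∑ n ∈ Icc (-(N : ℤ)) N, f n ≤
      ∑ m ∈ range (2 * N + 1), ∑ m' ∈ range (2 * N + 1), f (m - m') := by
  set g : ℤ × ℕ → ℕ × ℕ := fun p ↦ (p.2 + p.1.toNat, p.2 + (-p.1).toNat)
  have hg : ∀ p : ℤ × ℕ, ((g p).1 : ℤ) - (g p).2 = p.1 := fun p ↦ by simp only [g]; omega
  calc (N + 1) * ∑ n ∈ Icc (-(N : ℤ)) N, f n
      = ∑ p ∈ Icc (-(N : ℤ)) N ×ˢ range (N + 1), f ((g p).1 - (g p).2) := by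
        simp [hg, sum_product, mul_sum]
    _ ≤ ∑ q ∈ range (2 * N + 1) ×ˢ range (2 * N + 1), f (q.1 - q.2) :=
        sum_comp_le_sum_of_injOn (fun q : ℕ × ℕ ↦ f (q.1 - q.2))
          (fun p hp ↦ by
            simp only [g, coe_product, Set.mem_prod, mem_coe, mem_Icc, mem_range] at hp ⊢
            omega)
          (fun p _ q _ hpq ↦ by simp only [g, Prod.mk.injEq] at hpq; ext <;> omega)
          fun _ _ ↦ hf _
    _ = _ := sum_product _ _ _

lemma norm_sq_sum_mul_ee {κ : Type*} (s : Finset κ) (a : κ → ℂ) (x : κ → ℝ) :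
    (‖∑ k ∈ s, a k * ee (x k)‖ : ℂ) ^ 2 =
      ∑ k ∈ s, ∑ l ∈ s, a k * conj (a l) * ee (x k - x l) := by
  rw [← Complex.mul_conj', map_sum, sum_mul_sum]
  refine sum_congr rfl fun k _ ↦ sum_congr rfl fun l _ ↦ ?_
  rw [map_mul, ← ee_neg, sub_eq_add_neg, ee_add]
  ring

lemma norm_sq_sum_ee {κ : Type*} (s : Finset κ) (x : κ → ℝ) :
    (‖∑ k ∈ s, ee (x k)‖ : ℂ) ^ 2 = ∑ k ∈ s, ∑ l ∈ s, ee (x k - x l) := by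
  simpa using norm_sq_sum_mul_ee s 1 x

lemma norm_sum_range_ee_neg (M : ℕ) (θ : ℝ) :
    ‖∑ m ∈ range M, ee (m * -θ)‖ = ‖∑ m ∈ range M, ee (m * θ)‖ := by
  simp_rw [mul_neg, ee_neg, ← map_sum, Complex.norm_conj]

lemma sum_sum_mul_mul_le_of_symm {ι : Type*} [Fintype ι] (x : ι → ℝ) {w : ι → ι → ℝ}
    (hw : ∀ i j, w i j = w j i) (hw0 : ∀ i j, 0 ≤ w i j) {B : ℝ} (hB : ∀ i, ∑ j, w i j ≤ B) :
    ∑ i, ∑ j, x i * x j * w i j ≤ B * ∑ i, x i ^ 2 := by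
  have hswap : ∑ i, ∑ j, x j ^ 2 * w i j = ∑ i, ∑ j, x i ^ 2 * w i j := by
    rw [sum_comm]; simp_rw [hw]
  calc ∑ i, ∑ j, x i * x j * w i j
      ≤ ∑ i, ∑ j, (x i ^ 2 * w i j + x j ^ 2 * w i j) / 2 :=
        sum_le_sum fun i _ ↦ sum_le_sum fun j _ ↦ by nlinarith [sq_nonneg (x i - x j), hw0 i j]
    _ = ∑ i, x i ^ 2 * ∑ j, w i j := by
        simp_rw [← sum_div, sum_add_distrib, hswap, mul_sum]; ring
    _ ≤ ∑ i, x i ^ 2 * B := by gcongr with i; exact hB i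
    _ = B * ∑ i, x i ^ 2 := by rw [mul_sum]; simp_rw [mul_comm]

section LargeSieve

variable {ι : Type*} [Fintype ι]

lemma sum_range_sum_range_norm_sq_sum_mul_ee (M : ℕ) (a : ι → ℂ) (β : ι → ℝ) :
    ((∑ m ∈ range M, ∑ m' ∈ range M,
        ‖∑ i, a i * ee (((m - m' : ℤ) : ℝ) * β i)‖ ^ 2 : ℝ) : ℂ) =
      ∑ i, ∑ j, a i * conj (a j) * (‖∑ m ∈ range M, ee (m * (β i - β j))‖ : ℂ) ^ 2 := by
  push_cast
  simp only [norm_sq_sum_mul_ee, norm_sq_sum_ee, mul_sum]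
  simp only [sum_comm (s := range M) (t := (univ : Finset ι))]
  refine sum_congr rfl fun i _ ↦ sum_congr rfl fun j _ ↦ sum_congr rfl fun m _ ↦
    sum_congr rfl fun m' _ ↦ ?_
  ring_nf

lemma sum_norm_sq_sum_range_ee_le (M : ℕ) (β : ι → ℝ) {δ : ℝ} (hδ : 0 < δ)
    (hsep : ∀ i j, i ≠ j → δ ≤ distToInt (β i - β j)) (i : ι) :
    ∑ j, ‖∑ m ∈ range M, ee (m * (β i - β j))‖ ^ 2 ≤ M ^ 2 + 1 / δ ^ 2 := by
  classical
  set r : ι → ℝ := fun j ↦ β i - β j - round (β i - β j)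
  have hr : ∀ j ∈ univ.erase i, δ ≤ |r j| := fun j hj ↦ hsep i j (ne_of_mem_erase hj).symm
  have hr_sep : ∀ j ∈ univ.erase i, ∀ k ∈ univ.erase i, j ≠ k → δ ≤ |r j - r k| := by
    intro j _ k _ hjk
    calc δ ≤ distToInt (β k - β j) := hsep k j hjk.symm
      _ ≤ |β k - β j - (round (β i - β j) - round (β i - β k) : ℤ)| := round_le _ _
      _ = |r j - r k| := by simp only [r]; push_cast; ring_nf
  have hoff : ∀ j ∈ univ.erase i,
      ‖∑ m ∈ range M, ee (m * (β i - β j))‖ ^ 2 ≤ 1 / 4 * (1 / r j ^ 2) := by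
    intro j hj
    have hpos : 0 < distToInt (β i - β j) := hδ.trans_le (hr j hj)
    calc ‖∑ m ∈ range M, ee (m * (β i - β j))‖ ^ 2 ≤ (1 / (2 * distToInt (β i - β j))) ^ 2 :=
          pow_le_pow_left₀ (norm_nonneg _) (norm_sum_range_ee_le M hpos) 2
      _ = 1 / 4 * (1 / r j ^ 2) := by rw [distToInt, ← sq_abs (r j)]; ring
  rw [← add_sum_erase _ _ (mem_univ i), sub_self]
  simp only [mul_zero, ee_zero, sum_const, card_range, nsmul_one, norm_natCast]
  gcongr
  calc ∑ j ∈ univ.erase i, ‖∑ m ∈ range M, ee (m * (β i - β j))‖ ^ 2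
      ≤ 1 / 4 * ∑ j ∈ univ.erase i, 1 / r j ^ 2 := by rw [mul_sum]; exact sum_le_sum hoff
    _ ≤ 1 / 4 * (4 / δ ^ 2) := by
        gcongr; exact sum_one_div_sq_le_of_separated _ r hδ hr hr_sep
    _ = 1 / δ ^ 2 := by ring

theorem add_one_mul_sum_norm_sq_le (N : ℕ) (a : ι → ℂ) (β : ι → ℝ) {δ : ℝ} (hδ : 0 < δ)
    (hsep : ∀ i j, i ≠ j → δ ≤ distToInt (β i - β j)) :
    (N + 1) * ∑ n ∈ Icc (-(N : ℤ)) N, ‖∑ i, a i * ee (n * β i)‖ ^ 2 ≤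
      ((2 * N + 1) ^ 2 + 1 / δ ^ 2) * ∑ i, ‖a i‖ ^ 2 := by
  set M := 2 * N + 1
  set w : ι → ι → ℝ := fun i j ↦ ‖∑ m ∈ range M, ee (m * (β i - β j))‖ ^ 2
  have hw : ∀ i j, w i j = w j i := fun i j ↦ by
    simp only [w]; rw [← neg_sub, norm_sum_range_ee_neg]
  have hB : ∀ i, ∑ j, w i j ≤ (2 * N + 1) ^ 2 + 1 / δ ^ 2 := fun i ↦ by
    simpa [M] using sum_norm_sq_sum_range_ee_le M β hδ hsep i
  calc (N + 1) * ∑ n ∈ Icc (-(N : ℤ)) N, ‖∑ i, a i * ee (n * β i)‖ ^ 2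
      ≤ ∑ m ∈ range M, ∑ m' ∈ range M, ‖∑ i, a i * ee (((m - m' : ℤ) : ℝ) * β i)‖ ^ 2 :=
        add_one_mul_sum_Icc_le_sum_range_sum_range N _ fun _ ↦ sq_nonneg _
    _ = ‖∑ i, ∑ j, a i * conj (a j) * (‖∑ m ∈ range M, ee (m * (β i - β j))‖ : ℂ) ^ 2‖ := by
        rw [← sum_range_sum_range_norm_sq_sum_mul_ee, Complex.norm_of_nonneg (by positivity)]
    _ ≤ ∑ i, ∑ j, ‖a i‖ * ‖a j‖ * w i j := by
        refine (norm_sum_le _ _).trans (sum_le_sum fun i _ ↦ (norm_sum_le _ _).trans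
          (sum_le_sum fun j _ ↦ ?_))
        rw [norm_mul, norm_mul, Complex.norm_conj, norm_pow, Complex.norm_real, norm_norm]
    _ ≤ ((2 * N + 1) ^ 2 + 1 / δ ^ 2) * ∑ i, ‖a i‖ ^ 2 :=
        sum_sum_mul_mul_le_of_symm _ hw (fun _ _ ↦ by positivity) hB

end LargeSieve

theorem sum_norm_sq_le_of_separated {ι : Type*} [Fintype ι] (a : ι → ℂ) (β : ι → ℝ) {Q : ℝ}
    (hQ : 1 ≤ Q) (hsep : ∀ i j, i ≠ j → 1 / Q ≤ distToInt (β i - β j)) :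
    ∑ n ∈ Icc (-(⌊Q⌋₊ : ℤ)) ⌊Q⌋₊, ‖∑ i, a i * ee (n * β i)‖ ^ 2 ≤ 10 * Q * ∑ i, ‖a i‖ ^ 2 := by
  set N := ⌊Q⌋₊
  have hQ0 : 0 < Q := one_pos.trans_le hQ
  have hNQ : (N : ℝ) ≤ Q := Nat.floor_le hQ0.le
  have hQN : Q < N + 1 := Nat.lt_floor_add_one Q
  have hsieve := add_one_mul_sum_norm_sq_le N a β (one_div_pos.2 hQ0) hsep
  rw [div_pow, one_pow, one_div_one_div] at hsieve
  refine le_of_mul_le_mul_left ?_ hQ0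
  calc Q * ∑ n ∈ Icc (-(N : ℤ)) N, ‖∑ i, a i * ee (n * β i)‖ ^ 2
      ≤ (N + 1) * ∑ n ∈ Icc (-(N : ℤ)) N, ‖∑ i, a i * ee (n * β i)‖ ^ 2 := by
        gcongr
    _ ≤ ((2 * N + 1) ^ 2 + Q ^ 2) * ∑ i, ‖a i‖ ^ 2 := hsieve
    _ ≤ 10 * Q ^ 2 * ∑ i, ‖a i‖ ^ 2 := by gcongr; nlinarith
    _ = Q * (10 * Q * ∑ i, ‖a i‖ ^ 2) := by ring

lemma Real.rpow_add_two_le_mul_sq {x y p : ℝ} (hx : 0 ≤ x) (hxy : x ≤ y) (hp : 0 ≤ p) :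
    x ^ (p + 2) ≤ y ^ p * x ^ 2 := by
  rw [Real.rpow_add' hx (by positivity), Real.rpow_two]
  gcongr

/-- Restricted large sieve moment: there is an absolute `C > 0` such that
for any real `Q ≥ 1`, any `1/Q`-separated (mod 1) reals `β_1, …, β_R` and any reals
`c_i ≥ 1` with `J := ∑ c_i`,
`∑_{|n| ≤ Q} |∑_i c_i^{1/2} e(n β_i)|^{20/9} ≤ C J^{11/9} Q`. -/
theorem statement12 : ∃ C : ℝ, 0 < C ∧ ∀ (Q : ℝ), 1 ≤ Q → ∀ (R : ℕ) (β : Fin R → ℝ),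
    (∀ i j, i ≠ j → 1 / Q ≤ distToInt (β i - β j)) →
    ∀ c : Fin R → ℝ, (∀ i, 1 ≤ c i) →
    ∑ n ∈ Finset.Icc (-(⌊Q⌋₊ : ℤ)) (⌊Q⌋₊ : ℤ),
        ‖∑ i, (Real.sqrt (c i) : ℂ) * ee ((n : ℝ) * β i)‖ ^ ((20 : ℝ) / 9) ≤
      C * (∑ i, c i) ^ ((11 : ℝ) / 9) * Q := by
  refine ⟨10, by norm_num, fun Q hQ R β hsep c hc ↦ ?_⟩
  set J := ∑ i, c i
  have hJ : 0 ≤ J := sum_nonneg fun i _ ↦ zero_le_one.trans (hc i)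
  have hnorm : ∀ i, ‖(√(c i) : ℂ)‖ = √(c i) := fun i ↦ by
    rw [Complex.norm_real, Real.norm_of_nonneg (Real.sqrt_nonneg _)]
  have hbound : ∀ n : ℤ, ‖∑ i, (√(c i) : ℂ) * ee (n * β i)‖ ≤ J := fun n ↦
    (norm_sum_le _ _).trans <| sum_le_sum fun i _ ↦ by
      rw [norm_mul, norm_ee, mul_one, hnorm, Real.sqrt_le_self_iff]; exact Or.inr (hc i)
  have hsieve := sum_norm_sq_le_of_separated (fun i ↦ (√(c i) : ℂ)) β hQ hsep
  simp only [hnorm, Real.sq_sqrt (zero_le_one.trans (hc _))] at hsieve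
  calc ∑ n ∈ Icc (-(⌊Q⌋₊ : ℤ)) ⌊Q⌋₊, ‖∑ i, (√(c i) : ℂ) * ee (n * β i)‖ ^ ((20 : ℝ) / 9)
      ≤ ∑ n ∈ Icc (-(⌊Q⌋₊ : ℤ)) ⌊Q⌋₊,
          J ^ ((2 : ℝ) / 9) * ‖∑ i, (√(c i) : ℂ) * ee (n * β i)‖ ^ 2 :=
        sum_le_sum fun n _ ↦ by
          rw [show (20 : ℝ) / 9 = 2 / 9 + 2 by norm_num]
          exact Real.rpow_add_two_le_mul_sq (norm_nonneg _) (hbound n) (by norm_num)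
    _ ≤ J ^ ((2 : ℝ) / 9) * (10 * Q * J) := by rw [← mul_sum]; gcongr
    _ = 10 * J ^ ((11 : ℝ) / 9) * Q := by
        rw [show (11 : ℝ) / 9 = 2 / 9 + 1 by norm_num, Real.rpow_add' hJ (by norm_num),
          Real.rpow_one]
        ring
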